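/- Improvement by rescaling periods: let n, N be integers with 1 < N < n, let G = mI for a positive integer m and I > 0. If G' = lG with 1 < l < sqrt((1/m²)·(n−N)/N + 1) and I' = qI with 0 < q ≤ sqrt(1 − m²(l²−1)·N/(n−N)), then ((N−1)/(n−1))·G'² + (1 − (N−1)/(n−1))·I'² ≤ ((N−1)/(n−1))·G² + (1 − (N−1)/(n−1))·I², i.e., increasing the global period to G' while decreasing the local period to I' does not increase the divergence coefficient in the convergence bound. -/

import Mathlib

/-!
Writing `w = (N-1)/(n-1)`, so that `1 - w = (n-N)/(n-1)`, the rescaling changes the two terms by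
`w (l² - 1) G²` and `-(1 - w)(1 - q²) I²`, and with `G = mI` it suffices that
`(N - 1) m² (l² - 1) ≤ (n - N)(1 - q²)`. Squaring the bound on `q` gives this with `N` in place
of `N - 1`, which is stronger because `l > 1`.
-/

lemma le_mul_one_sub_sq_of_le_sqrt {q c d : ℝ} (hq : 0 < q) (hd : 0 < d)
    (h : q ≤ √(1 - c / d)) : c ≤ d * (1 - q ^ 2) := by
  have hq2 : q ^ 2 ≤ 1 - c / d := (Real.le_sqrt' hq).1 h
  have hcd : c / d ≤ 1 - q ^ 2 := by linarith
  rwa [div_le_iff₀ hd, mul_comm] at hcd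

lemma add_sq_rescale_le {a b x y l q : ℝ}
    (h : a * (l ^ 2 - 1) * x ^ 2 ≤ b * (1 - q ^ 2) * y ^ 2) :
    a * (l * x) ^ 2 + b * (q * y) ^ 2 ≤ a * x ^ 2 + b * y ^ 2 := by
  linear_combination h

theorem improvement_by_rescaling_general {n N m : ℕ} (hN : 1 < N) (hn : N < n)
    {I G l q G' I' : ℝ} (hG : G = (m : ℝ) * I)
    (hl1 : 1 < l)
    (hq1 : 0 < q)
    (hq2 : q ≤ Real.sqrt (1 - (m : ℝ) ^ 2 * (l ^ 2 - 1) * (N : ℝ) / ((n : ℝ) - (N : ℝ))))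
    (hG' : G' = l * G) (hI' : I' = q * I) :
    ((N : ℝ) - 1) / ((n : ℝ) - 1) * G' ^ 2
        + (1 - ((N : ℝ) - 1) / ((n : ℝ) - 1)) * I' ^ 2
      ≤ ((N : ℝ) - 1) / ((n : ℝ) - 1) * G ^ 2
        + (1 - ((N : ℝ) - 1) / ((n : ℝ) - 1)) * I ^ 2 := by
  have hN' : (1 : ℝ) < N := by exact_mod_cast hN
  have hn' : (N : ℝ) < n := by exact_mod_cast hn
  have hweight : 1 - ((N : ℝ) - 1) / (n - 1) = (n - N) / (n - 1) := by
    field_simp [show (n : ℝ) - 1 ≠ 0 by linarith]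
    ring
  have hl : 0 ≤ (l ^ 2 - 1) * (m * I) ^ 2 := by
    have : 0 ≤ l ^ 2 - 1 := by nlinarith
    positivity
  have budget : (m : ℝ) ^ 2 * (l ^ 2 - 1) * N ≤ (n - N) * (1 - q ^ 2) :=
    le_mul_one_sub_sq_of_le_sqrt hq1 (by linarith) hq2
  subst hG hG' hI'
  apply add_sq_rescale_le
  rw [hweight]
  calc ((N : ℝ) - 1) / (n - 1) * (l ^ 2 - 1) * (m * I) ^ 2
      ≤ N / (n - 1) * (l ^ 2 - 1) * (m * I) ^ 2 := by
        rw [mul_assoc, mul_assoc]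
        gcongr
        · linarith
        · linarith
    _ = (m ^ 2 * (l ^ 2 - 1) * N) / (n - 1) * I ^ 2 := by ring
    _ ≤ ((n - N) * (1 - q ^ 2)) / (n - 1) * I ^ 2 := by
        gcongr
        linarith
    _ = (n - N) / (n - 1) * (1 - q ^ 2) * I ^ 2 := by ring

theorem improvement_by_rescaling {n N m : ℕ} (hN : 1 < N) (hn : N < n) (hm : 0 < m)
    {I G l q G' I' : ℝ} (hI : 0 < I) (hG : G = (m : ℝ) * I)
    (hl1 : 1 < l)
    (hl2 : l < Real.sqrt ((1 / (m : ℝ) ^ 2) * (((n : ℝ) - (N : ℝ)) / (N : ℝ)) + 1))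
    (hq1 : 0 < q)
    (hq2 : q ≤ Real.sqrt (1 - (m : ℝ) ^ 2 * (l ^ 2 - 1) * (N : ℝ) / ((n : ℝ) - (N : ℝ))))
    (hG' : G' = l * G) (hI' : I' = q * I) :
    ((N : ℝ) - 1) / ((n : ℝ) - 1) * G' ^ 2
        + (1 - ((N : ℝ) - 1) / ((n : ℝ) - 1)) * I' ^ 2
      ≤ ((N : ℝ) - 1) / ((n : ℝ) - 1) * G ^ 2
        + (1 - ((N : ℝ) - 1) / ((n : ℝ) - 1)) * I ^ 2 :=
  improvement_by_rescaling_general hN hn hG hl1 hq1 hq2 hG' hI'
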